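/- arXiv:0801.4076 — 4 statements merged into one kernel-verified Lean document; each statement's English description precedes it below -/
import Mathlib

section
/- Every composition algebra is alternative: a²c = a(ac) and (ca)a = ca² hold for all a, c. -/
open QuadraticMap

/-!
Linearizing `n (x * y) = n x * n y` expresses `polar n (a * (a * c)) d` and
`polar n (c * a * a) d` through `t = polar n a 1`. Comparing with `t • (a * c) - n a • c`
(resp. `t • (c * a) - n a • c`) against every `d`, nondegeneracy gives
`a * (a * c) = t • (a * c) - n a • c`. For `c = 1` this is the Cayley–Hamilton relation
`a * a = t • a - n a • 1`, which turns `a * a * c` and `c * (a * a)` into the same expressions.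
-/

namespace CompositionAlgebra

variable {k A : Type*} [CommRing k] [NonAssocRing A] [Module k A] {n : QuadraticForm k A}

theorem polar_mul_right_mul_right (hm : ∀ a b : A, n (a * b) = n a * n b)
    (a b c : A) :
    polar n (a * c) (b * c) = polar n a b * n c := by
  have h := hm (a + b) c
  rw [add_mul] at h
  simp only [polar, hm]
  linear_combination h

theorem polar_mul_left_mul_left (hm : ∀ a b : A, n (a * b) = n a * n b)
    (a b c : A) :
    polar n (a * b) (a * c) = n a * polar n b c := by
  have h := hm a (b + c)
  rw [mul_add] at h
  simp only [polar, hm]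
  linear_combination h

theorem polar_mul_mul_add_polar_mul_mul (hm : ∀ a b : A, n (a * b) = n a * n b)
    (a b c d : A) :
    polar n (a * c) (b * d) + polar n (a * d) (b * c) = polar n a b * polar n c d := by
  have h := polar_mul_right_mul_right hm a b (c + d)
  simp only [mul_add, polar_add_left, polar_add_right, polar_mul_right_mul_right hm] at h
  rw [QuadraticMap.map_add n] at h
  linear_combination h

theorem polar_mul_left_add_polar_mul_left (hm : ∀ a b : A, n (a * b) = n a * n b)
    (a b c : A) :
    polar n (a * b) c + polar n (a * c) b = polar n a 1 * polar n b c := by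
  simpa only [one_mul] using polar_mul_mul_add_polar_mul_mul hm a 1 b c

theorem polar_mul_right_add_polar_mul_right (hm : ∀ a b : A, n (a * b) = n a * n b)
    (a b d : A) :
    polar n (b * a) d + polar n b (d * a) = polar n a 1 * polar n b d := by
  simpa only [mul_one, mul_comm] using polar_mul_mul_add_polar_mul_mul hm b d a 1

theorem eq_of_polar_eq (hnd : ∀ a : A, (∀ b : A, polar n a b = 0) → a = 0) {x y : A}
    (h : ∀ d, polar n x d = polar n y d) : x = y :=
  sub_eq_zero.mp <| hnd _ fun d => by rw [polar_sub_left, h, sub_self]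

theorem polar_smul_sub_smul (t s : k) (u v d : A) :
    polar n (t • u - s • v) d = t * polar n u d - s * polar n v d := by
  rw [polar_sub_left, polar_smul_left, polar_smul_left, smul_eq_mul, smul_eq_mul]

theorem mul_mul_left_eq (hnd : ∀ a : A, (∀ b : A, polar n a b = 0) → a = 0)
    (hm : ∀ a b : A, n (a * b) = n a * n b) (a c : A) :
    a * (a * c) = polar n a 1 • (a * c) - n a • c := by
  refine eq_of_polar_eq hnd fun d => ?_
  rw [polar_smul_sub_smul]
  have h := polar_mul_left_add_polar_mul_left hm a (a * c) d
  rw [polar_mul_left_mul_left hm, polar_comm n d c] at h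
  linear_combination h

theorem mul_mul_right_eq (hnd : ∀ a : A, (∀ b : A, polar n a b = 0) → a = 0)
    (hm : ∀ a b : A, n (a * b) = n a * n b) (a c : A) :
    c * a * a = polar n a 1 • (c * a) - n a • c := by
  refine eq_of_polar_eq hnd fun d => ?_
  rw [polar_smul_sub_smul]
  have h := polar_mul_right_add_polar_mul_right hm a (c * a) d
  rw [polar_mul_right_mul_right hm] at h
  linear_combination h

theorem mul_self_eq (hnd : ∀ a : A, (∀ b : A, polar n a b = 0) → a = 0)
    (hm : ∀ a b : A, n (a * b) = n a * n b) (a : A) :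
    a * a = polar n a 1 • a - n a • (1 : A) := by
  simpa only [mul_one] using mul_mul_left_eq hnd hm a 1

end CompositionAlgebra

open CompositionAlgebra in
/-- Every composition algebra is alternative:
`a²c = a(ac)` and `(ca)a = ca²` for all `a, c`. -/
theorem stmt_6 {k A : Type*} [Field k] [NonAssocRing A] [Module k A]
    [SMulCommClass k A A] [IsScalarTower k A A]
    (n : QuadraticForm k A)
    (hnd : ∀ a : A, (∀ b : A, polar (⇑n) a b = 0) → a = 0)
    (hm : ∀ a b : A, n (a * b) = n a * n b) :
    ∀ a c : A, a * a * c = a * (a * c) ∧ c * a * a = c * (a * a) := by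
  intro a c
  constructor
  · rw [mul_mul_left_eq hnd hm, mul_self_eq hnd hm, sub_mul, smul_mul_assoc, smul_mul_assoc,
      one_mul]
  · rw [mul_mul_right_eq hnd hm, mul_self_eq hnd hm, mul_sub, mul_smul_comm, mul_smul_comm,
      mul_one]
end

section
/- Let A be a unital algebra with an involutive anti-automorphism a ↦ ã fixing the unit such that a + ã and aã are scalar multiples of the unit for all a. Define n(a) by aã = n(a)e. If A is alternative then n is multiplicative: n(ab) = n(a)n(b) for all a, b. -/
/-!
In an alternative algebra the polarized alternative laws give the Moufang-type identity
`(b a)(a b) = b (a (a b))`. Since `ã = t(a) e - a`, this makes `b̃ ã (a b) = b̃ (ã (a b))`, and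
`ã (a b) = (ã a) b = n(a) b` by left alternativity, so
`n(ab) e = (b̃ ã)(a b) = b̃ (n(a) b) = n(a) n(b) e`.
-/

section Alternative

variable {A : Type*} [NonUnitalNonAssocRing A]

theorem polarize_left_alternative (hl : ∀ x y : A, x * x * y = x * (x * y)) (x z y : A) :
    x * z * y + z * x * y = x * (z * y) + z * (x * y) := by
  have h := hl (x + z) y
  simp only [add_mul, mul_add, hl x y, hl z y] at h
  rw [← sub_eq_zero] at h ⊢
  rw [← h]
  abel

theorem polarize_right_alternative (hr : ∀ x y : A, y * x * x = y * (x * x)) (y x z : A) :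
    y * x * z + y * z * x = y * (x * z) + y * (z * x) := by
  have h := hr (x + z) y
  simp only [add_mul, mul_add, hr x y, hr z y] at h
  rw [← sub_eq_zero] at h ⊢
  rw [← h]
  abel

theorem mul_mul_mul_self_of_alternative (hl : ∀ x y : A, x * x * y = x * (x * y))
    (hr : ∀ x y : A, y * x * x = y * (x * x)) (a b : A) :
    b * a * (a * b) = b * (a * (a * b)) := by
  have h₁ : a * (a * b) * b = a * (a * b * b) := by
    rw [← hl, hr, hl, ← hr]
  have h₂ : a * b * (a * b) = a * (b * (a * b)) := by
    have h := polarize_right_alternative hr a b (a * b)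
    rwa [h₁, add_left_inj] at h
  have h := polarize_left_alternative hl b a (a * b)
  rwa [h₂, add_left_inj] at h

end Alternative

section ScalarMinus

variable {k A : Type*} [Semiring k] [NonAssocRing A] [Module k A]
  [IsScalarTower k A A] {σ : A → A} {t : A → k}

theorem mul_comm_of_eq_smul_one_sub [SMulCommClass k A A] (hσ : ∀ x, σ x = t x • (1 : A) - x) (x : A) :
    σ x * x = x * σ x := by
  simp only [hσ, sub_mul, mul_sub, smul_mul_assoc, mul_smul_comm, one_mul, mul_one]

theorem mul_mul_assoc_of_eq_smul_one_sub (hσ : ∀ x, σ x = t x • (1 : A) - x)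
    (hl : ∀ x y : A, x * x * y = x * (x * y)) (x y : A) :
    σ x * (x * y) = σ x * x * y := by
  simp only [hσ, sub_mul, smul_mul_assoc, one_mul, hl]

theorem mul_mul_mul_assoc_of_eq_smul_one_sub [SMulCommClass k A A]
    (hσ : ∀ x, σ x = t x • (1 : A) - x)
    (hl : ∀ x y : A, x * x * y = x * (x * y)) (hr : ∀ x y : A, y * x * x = y * (x * x))
    (a b : A) :
    σ b * σ a * (a * b) = σ b * (σ a * (a * b)) := by
  simp only [hσ, sub_mul, mul_sub, smul_mul_assoc, mul_smul_comm, one_mul, mul_one,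
    smul_sub, mul_mul_mul_self_of_alternative hl hr]

end ScalarMinus

theorem stmt_9_general {k A : Type*} [Field k] [NonAssocRing A] [Module k A]
    [SMulCommClass k A A] [IsScalarTower k A A]
    (σ : A →ₗ[k] A)
    (hσmul : ∀ a b : A, σ (a * b) = σ b * σ a)
    (htr : ∀ a : A, ∃ c : k, a + σ a = c • (1 : A))
    (hfaith : ∀ c d : k, c • (1 : A) = d • (1 : A) → c = d)
    (n : A → k) (hn : ∀ a : A, a * σ a = n a • (1 : A))
    (halt : ∀ x y : A, x * x * y = x * (x * y) ∧ y * x * x = y * (x * x)) :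
    ∀ a b : A, n (a * b) = n a * n b := by
  choose t ht using htr
  have hσ : ∀ x, σ x = t x • (1 : A) - x := fun x => eq_sub_of_add_eq' (ht x)
  have hl : ∀ x y : A, x * x * y = x * (x * y) := fun x y => (halt x y).1
  have hr : ∀ x y : A, y * x * x = y * (x * x) := fun x y => (halt x y).2
  have hn' : ∀ x, σ x * x = n x • (1 : A) := fun x => by
    rw [mul_comm_of_eq_smul_one_sub hσ, hn]
  intro a b
  apply hfaith
  calc n (a * b) • (1 : A)
      = σ b * σ a * (a * b) := by rw [← hn', hσmul]
    _ = σ b * (σ a * a * b) := by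
      rw [mul_mul_mul_assoc_of_eq_smul_one_sub hσ hl hr, mul_mul_assoc_of_eq_smul_one_sub hσ hl]
    _ = (n a * n b) • (1 : A) := by
      rw [hn', smul_mul_assoc, one_mul, mul_smul_comm, hn', smul_smul]

/-- Let `A` be a unital algebra with an involutive anti-automorphism `a ↦ σ a`
fixing the unit, such that `a + σ a` and `a * σ a` are scalar multiples of the unit for all
`a`. Define `n : A → k` by `a * σ a = n a • 1`. If `A` is alternative then `n` is
multiplicative: `n(ab) = n(a)n(b)` for all `a, b`. -/
theorem stmt_9 {k A : Type*} [Field k] [NonAssocRing A] [Module k A]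
    [SMulCommClass k A A] [IsScalarTower k A A]
    (σ : A →ₗ[k] A)
    (hσmul : ∀ a b : A, σ (a * b) = σ b * σ a)
    (hσinv : ∀ a : A, σ (σ a) = a)
    (hσ1 : σ 1 = 1)
    (htr : ∀ a : A, ∃ c : k, a + σ a = c • (1 : A))
    (hfaith : ∀ c d : k, c • (1 : A) = d • (1 : A) → c = d)
    (n : A → k) (hn : ∀ a : A, a * σ a = n a • (1 : A))
    (halt : ∀ x y : A, x * x * y = x * (x * y) ∧ y * x * x = y * (x * x)) :
    ∀ a b : A, n (a * b) = n a * n b :=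
  stmt_9_general σ hσmul htr hfaith n hn halt
end

section
/- Any injective unital algebra homomorphism between composition algebras is a partial isometry: if f : B → A is an injective homomorphism of composition algebras (B, n') and (A, n) with f(e') = e, then n(f(x)) = n'(x) for all x ∈ B. -/
open QuadraticMap

/-!
Linearising `n (x * y) = n x * n y` and using non-degeneracy, every element of a composition
algebra satisfies its Cayley–Hamilton relation `x * x = t(x) • x - n(x) • 1` with
`t(x) = polar n x 1`. For `x ∈ B`, the element `f x` therefore satisfies two monic quadratic
relations, one with coefficients from `n'` and one from `n`. If the constant terms `n' x` and
`n (f x)` differed, subtracting would force `f x`, hence `x` by injectivity, to be a scalar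
`r • 1`, and both norms of a scalar are `r ^ 2`.
-/

namespace CompositionAlgebra

variable {k A : Type*} [Field k] [NonAssocRing A] [Module k A] {n : QuadraticForm k A}

theorem polar_mul_mul_left (hm : ∀ a b : A, n (a * b) = n a * n b) (x y z : A) :
    polar n (x * y) (x * z) = n x * polar n y z := by
  simp only [polar, ← mul_add, hm]
  ring

theorem polar_mul_add_polar_mul (hm : ∀ a b : A, n (a * b) = n a * n b) (x w y z : A) :
    polar n (x * y) (w * z) + polar n (w * y) (x * z) = polar n x w * polar n y z := by
  have h := polar_mul_mul_left hm (x + w) y z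
  have hn : n (x + w) = n x + n w + polar n x w := by simp [polar]
  rw [add_mul, add_mul, polar_add_left, polar_add_right, polar_add_right, hn] at h
  linear_combination h - polar_mul_mul_left hm x y z - polar_mul_mul_left hm w y z

theorem mul_self_eq_polar_smul_sub_smul_one (hnd : ∀ a : A, (∀ b : A, polar n a b = 0) → a = 0)
    (hm : ∀ a b : A, n (a * b) = n a * n b) (x : A) :
    x * x = polar n x 1 • x - n x • (1 : A) := by
  rw [← sub_eq_zero]
  refine hnd _ fun z => ?_
  have h1 := polar_mul_add_polar_mul hm x 1 x z
  have h2 := polar_mul_mul_left hm x 1 z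
  rw [one_mul, one_mul] at h1
  rw [mul_one] at h2
  rw [polar_sub_left, polar_sub_left, polar_smul_left, polar_smul_left, smul_eq_mul, smul_eq_mul]
  linear_combination h1 - h2

theorem apply_one [Nontrivial A] (hnd : ∀ a : A, (∀ b : A, polar n a b = 0) → a = 0)
    (hm : ∀ a b : A, n (a * b) = n a * n b) : n 1 = 1 := by
  have hn1 : n 1 ≠ 0 := by
    intro hz
    have hzero : ∀ a : A, n a = 0 := fun a => by rw [← mul_one a, hm, hz, mul_zero]
    exact one_ne_zero (hnd 1 fun b => by simp [polar, hzero])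
  have h := hm 1 1
  rw [mul_one] at h
  exact (mul_right_eq_self₀.mp h.symm).resolve_right hn1

theorem apply_smul_one [Nontrivial A] (hnd : ∀ a : A, (∀ b : A, polar n a b = 0) → a = 0)
    (hm : ∀ a b : A, n (a * b) = n a * n b) (r : k) : n (r • (1 : A)) = r ^ 2 := by
  rw [QuadraticMap.map_smul, apply_one hnd hm, smul_eq_mul, mul_one, _root_.sq]

end CompositionAlgebra

theorem exists_eq_smul_of_smul_sub_smul_eq {k V : Type*} [Field k] [AddCommGroup V] [Module k V]
    {a e : V} (he : e ≠ 0) {t t' m m' : k} (h : t • a - m • e = t' • a - m' • e) (hm : m ≠ m') :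
    ∃ r : k, a = r • e := by
  have hdiff : (t - t') • a = (m - m') • e := by
    rw [sub_smul, sub_smul]
    linear_combination (norm := abel) h
  have ht : t - t' ≠ 0 := by
    rintro ht
    rw [ht, zero_smul, eq_comm, smul_eq_zero] at hdiff
    exact hdiff.elim (sub_ne_zero.mpr hm) he
  refine ⟨(t - t')⁻¹ * (m - m'), ?_⟩
  rw [mul_smul, ← hdiff, inv_smul_smul₀ ht]

open CompositionAlgebra in
theorem stmt_10_general {k A B : Type*} [Field k]
    [NonAssocRing A] [Module k A]
    [NonAssocRing B] [Module k B]
    (n : QuadraticForm k A)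
    (hnd : ∀ a : A, (∀ b : A, polar (⇑n) a b = 0) → a = 0)
    (hm : ∀ a b : A, n (a * b) = n a * n b)
    (n' : QuadraticForm k B)
    (hnd' : ∀ a : B, (∀ b : B, polar (⇑n') a b = 0) → a = 0)
    (hm' : ∀ a b : B, n' (a * b) = n' a * n' b)
    (f : B →ₗ[k] A)
    (hfmul : ∀ x y : B, f (x * y) = f x * f y)
    (hfone : f 1 = 1)
    (hfinj : Function.Injective f) :
    ∀ x : B, n (f x) = n' x := by
  intro x
  rcases subsingleton_or_nontrivial A with hA | hA
  · obtain rfl : x = 0 := hfinj (Subsingleton.elim _ _)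
    simp
  have : Nontrivial B := nontrivial_of_ne 1 0 fun h => by simp [h] at hfone
  have hfx : f x * f x = polar n' x 1 • f x - n' x • (1 : A) := by
    simpa [hfmul, hfone] using congrArg f (mul_self_eq_polar_smul_sub_smul_one hnd' hm' x)
  by_contra hne
  obtain ⟨r, hr⟩ := exists_eq_smul_of_smul_sub_smul_eq one_ne_zero
    ((mul_self_eq_polar_smul_sub_smul_one hnd hm (f x)).symm.trans hfx) hne
  have hx : x = r • (1 : B) := hfinj (by rw [hr, map_smul, hfone])
  exact hne (by rw [hr, hx, apply_smul_one hnd hm, apply_smul_one hnd' hm'])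

/-- Any injective unital algebra homomorphism between composition algebras is
a partial isometry: if `f : B → A` is an injective homomorphism of composition algebras
`(B, n')` and `(A, n)` with `f e' = e`, then `n (f x) = n' x` for all `x ∈ B`. -/
theorem stmt_10 {k A B : Type*} [Field k]
    [NonAssocRing A] [Module k A] [SMulCommClass k A A] [IsScalarTower k A A]
    [NonAssocRing B] [Module k B] [SMulCommClass k B B] [IsScalarTower k B B]
    (n : QuadraticForm k A)
    (hnd : ∀ a : A, (∀ b : A, polar (⇑n) a b = 0) → a = 0)
    (hm : ∀ a b : A, n (a * b) = n a * n b)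
    (n' : QuadraticForm k B)
    (hnd' : ∀ a : B, (∀ b : B, polar (⇑n') a b = 0) → a = 0)
    (hm' : ∀ a b : B, n' (a * b) = n' a * n' b)
    (f : B →ₗ[k] A)
    (hfmul : ∀ x y : B, f (x * y) = f x * f y)
    (hfone : f 1 = 1)
    (hfinj : Function.Injective f) :
    ∀ x : B, n (f x) = n' x :=
  stmt_10_general n hnd hm n' hnd' hm' f hfmul hfone hfinj
end

section
/- The Cayley–Dickson double A(μ) = A ⊕ vA of a composition algebra A, with product (a₁ + v b₁)(a₂ + v b₂) = a₁a₂ + μ b₂ b̃₁ + v(ã₁ b₂ + a₂ b₁), is alternative if and only if A is associative. -/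
open QuadraticMap

/-- The Cayley conjugate `ã = (a : e)e − a` in a composition algebra. -/
def cconj {k A : Type*} [Field k] [NonAssocRing A] [Module k A]
    [SMulCommClass k A A] [IsScalarTower k A A]
    (n : QuadraticForm k A) (a : A) : A :=
  polar (⇑n) a 1 • (1 : A) - a

/-- The Cayley–Dickson product on `A × A`, writing `(a, b) = a + vb`:
`(a₁ + v b₁)(a₂ + v b₂) = a₁a₂ + μ b₂ b̃₁ + v(ã₁ b₂ + a₂ b₁)`. -/
def cdMul {k A : Type*} [Field k] [NonAssocRing A] [Module k A]
    [SMulCommClass k A A] [IsScalarTower k A A]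
    (n : QuadraticForm k A) (μ : k) (x y : A × A) : A × A :=
  (x.1 * y.1 + μ • (y.2 * cconj n x.2), cconj n x.1 * y.2 + y.1 * x.2)

/-! Multiplicativity of a nondegenerate norm makes the Cayley conjugation an involutive
anti-automorphism with `a ã = ã a = n(a)` and `a + ã = T(a)` a scalar, where
`T(a) = polar n a 1`. When `A` is associative these identities are all one needs to check both
alternative laws of `A(μ)` componentwise. Conversely, the first component of the left alternative
law for `x = ã + v c̃` and `y = v b` reads `μ T(a) bc = μ ã(bc) + μ (ab)c`; since
`T(a) bc = a(bc) + ã(bc)` and `μ ≠ 0`, this is `(ab)c = a(bc)`. -/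

section Polar

variable {k A : Type*} [CommRing k] [NonUnitalNonAssocRing A] [Module k A]
  {n : QuadraticForm k A}

theorem polar_mul_mul_left (hm : ∀ a b : A, n (a * b) = n a * n b) (a b c : A) :
    polar n (a * b) (a * c) = n a * polar n b c := by
  simp only [polar, ← mul_add, hm]; ring

theorem polar_mul_mul_right (hm : ∀ a b : A, n (a * b) = n a * n b) (a b c : A) :
    polar n (a * c) (b * c) = polar n a b * n c := by
  simp only [polar, ← add_mul, hm]; ring

theorem polar_mul_add_polar_mul (hm : ∀ a b : A, n (a * b) = n a * n b) (a b c d : A) :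
    polar n (a * c) (b * d) + polar n (a * d) (b * c) = polar n a b * polar n c d := by
  have h := polar_mul_mul_right hm a b (c + d)
  simp only [mul_add, polar_add_left, polar_add_right, QuadraticMap.map_add (⇑n),
    polar_mul_mul_right hm] at h
  linear_combination h

end Polar

section Unital

variable {k A : Type*} [CommRing k] [NonAssocRing A] [Module k A] {n : QuadraticForm k A}

theorem map_one_of_map_mul [NoZeroDivisors k] [Nontrivial A]
    (hnd : ∀ a : A, (∀ b : A, polar n a b = 0) → a = 0)
    (hm : ∀ a b : A, n (a * b) = n a * n b) : n 1 = 1 := by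
  by_contra h
  refine one_ne_zero (hnd 1 fun b => ?_)
  have h1 := polar_mul_mul_left hm 1 1 b
  rw [one_mul, one_mul] at h1
  exact (mul_eq_zero.mp (by linear_combination -h1 : (n 1 - 1) * polar n 1 b = 0)).resolve_left
    (sub_ne_zero.mpr h)

theorem polar_one_one (hn1 : n 1 = 1) : polar n (1 : A) 1 = 2 := by
  rw [polar_self, hn1, two_nsmul, one_add_one_eq_two]

end Unital

section Conj

variable {k A : Type*} [Field k] [NonAssocRing A] [Module k A]
  [SMulCommClass k A A] [IsScalarTower k A A] {n : QuadraticForm k A}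

theorem cconj_add (a b : A) : cconj n (a + b) = cconj n a + cconj n b := by
  simp only [cconj, polar_add_left, add_smul]; abel

theorem cconj_smul (s : k) (a : A) : cconj n (s • a) = s • cconj n a := by
  simp only [cconj, polar_smul_left, smul_eq_mul, mul_smul, smul_sub]

theorem cconj_mul_add_mul (a b : A) : cconj n a * b + a * b = polar n a 1 • b := by
  rw [cconj, sub_mul, smul_mul_assoc, one_mul]; abel

theorem mul_add_mul_cconj (a b : A) : b * a + b * cconj n a = polar n a 1 • b := by
  rw [cconj, mul_sub, mul_smul_comm, mul_one]; abel

theorem cconj_one (hn1 : n 1 = 1) : cconj n (1 : A) = 1 := by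
  rw [cconj, polar_one_one hn1, two_smul]; abel

theorem polar_cconj_one (hn1 : n 1 = 1) (a : A) : polar n (cconj n a) 1 = polar n a 1 := by
  rw [cconj, polar_sub_left, polar_smul_left, polar_one_one hn1, smul_eq_mul]; ring

theorem cconj_cconj (hn1 : n 1 = 1) (a : A) : cconj n (cconj n a) = a := by
  rw [cconj, polar_cconj_one hn1, cconj]; abel

theorem map_cconj (hn1 : n 1 = 1) (a : A) : n (cconj n a) = n a := by
  rw [cconj, sub_eq_add_neg, QuadraticMap.map_add (⇑n), QuadraticMap.map_smul,
    QuadraticMap.map_neg, polar_neg_right, polar_smul_left, smul_eq_mul, smul_eq_mul, hn1,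
    polar_comm n 1 a]
  ring

theorem polar_mul_left_eq_polar_cconj_mul (hm : ∀ a b : A, n (a * b) = n a * n b) (a b c : A) :
    polar n (a * b) c = polar n b (cconj n a * c) := by
  have h := polar_mul_add_polar_mul hm 1 a c b
  simp only [one_mul] at h
  rw [cconj, sub_mul, smul_mul_assoc, one_mul, polar_sub_right, polar_smul_right, smul_eq_mul]
  linear_combination h + polar_comm n (a * b) c + polar n c b * polar_comm n 1 a
    + polar n a 1 * polar_comm n c b

theorem polar_mul_right_eq_polar_mul_cconj (hm : ∀ a b : A, n (a * b) = n a * n b) (a b c : A) :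
    polar n (a * b) c = polar n a (c * cconj n b) := by
  have h := polar_mul_add_polar_mul hm a c b 1
  simp only [mul_one] at h
  rw [cconj, mul_sub, mul_smul_comm, mul_one, polar_sub_right, polar_smul_right, smul_eq_mul]
  linear_combination h

theorem mul_cconj_self (hnd : ∀ a : A, (∀ b : A, polar n a b = 0) → a = 0)
    (hm : ∀ a b : A, n (a * b) = n a * n b) (hn1 : n 1 = 1) (a : A) :
    a * cconj n a = n a • 1 := by
  refine sub_eq_zero.mp (hnd _ fun c => ?_)
  have h := polar_mul_mul_left hm (cconj n a) 1 c
  rw [mul_one, map_cconj hn1] at h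
  rw [polar_sub_left, polar_smul_left, polar_mul_left_eq_polar_cconj_mul hm, h, smul_eq_mul,
    sub_self]

theorem cconj_mul_self (hnd : ∀ a : A, (∀ b : A, polar n a b = 0) → a = 0)
    (hm : ∀ a b : A, n (a * b) = n a * n b) (hn1 : n 1 = 1) (a : A) :
    cconj n a * a = n a • 1 := by
  refine sub_eq_zero.mp (hnd _ fun c => ?_)
  have h := polar_mul_mul_right hm 1 c (cconj n a)
  rw [one_mul, map_cconj hn1] at h
  rw [polar_sub_left, polar_smul_left, polar_mul_right_eq_polar_mul_cconj hm, h, smul_eq_mul,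
    polar_comm n 1 c]
  ring

theorem mul_self_eq (hnd : ∀ a : A, (∀ b : A, polar n a b = 0) → a = 0)
    (hm : ∀ a b : A, n (a * b) = n a * n b) (hn1 : n 1 = 1) (a : A) :
    a * a = polar n a 1 • a - n a • 1 := by
  rw [← mul_cconj_self hnd hm hn1 a, ← mul_add_mul_cconj a a]; abel

theorem mul_add_mul_eq (hnd : ∀ a : A, (∀ b : A, polar n a b = 0) → a = 0)
    (hm : ∀ a b : A, n (a * b) = n a * n b) (hn1 : n 1 = 1) (a b : A) :
    a * b + b * a = polar n a 1 • b + polar n b 1 • a - polar n a b • 1 := by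
  have h := mul_self_eq hnd hm hn1 (a + b)
  rw [mul_add, add_mul, add_mul, polar_add_left, QuadraticMap.map_add (⇑n),
    mul_self_eq hnd hm hn1 a, mul_self_eq hnd hm hn1 b] at h
  linear_combination (norm := module) h

theorem polar_mul_one (hm : ∀ a b : A, n (a * b) = n a * n b) (a b : A) :
    polar n (a * b) 1 = polar n a 1 * polar n b 1 - polar n a b := by
  rw [polar_mul_left_eq_polar_cconj_mul hm, cconj, mul_one, polar_sub_right, polar_smul_right,
    smul_eq_mul, polar_comm n b a]

theorem cconj_mul (hnd : ∀ a : A, (∀ b : A, polar n a b = 0) → a = 0)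
    (hm : ∀ a b : A, n (a * b) = n a * n b) (hn1 : n 1 = 1) (a b : A) :
    cconj n (a * b) = cconj n b * cconj n a := by
  have h := mul_add_mul_eq hnd hm hn1 a b
  simp only [cconj, polar_mul_one hm, sub_mul, mul_sub, smul_mul_assoc, mul_smul_comm, one_mul,
    mul_one]
  linear_combination (norm := module) -h

theorem cdMul_self (hnd : ∀ a : A, (∀ b : A, polar n a b = 0) → a = 0)
    (hm : ∀ a b : A, n (a * b) = n a * n b) (hn1 : n 1 = 1) (μ : k) (x : A × A) :
    cdMul n μ x x = (x.1 * x.1 + (μ * n x.2) • 1, polar n x.1 1 • x.2) := by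
  rw [cdMul, mul_cconj_self hnd hm hn1, cconj_mul_add_mul, mul_smul]

theorem cdMul_left_alternative (hnd : ∀ a : A, (∀ b : A, polar n a b = 0) → a = 0)
    (hm : ∀ a b : A, n (a * b) = n a * n b) (hn1 : n 1 = 1)
    (hassoc : ∀ a b c : A, a * b * c = a * (b * c)) (μ : k) (x y : A × A) :
    cdMul n μ (cdMul n μ x x) y = cdMul n μ x (cdMul n μ x y) := by
  obtain ⟨a, b⟩ := x
  obtain ⟨c, d⟩ := y
  rw [cdMul_self hnd hm hn1]
  simp only [cdMul, Prod.mk.injEq, cconj_add, cconj_smul, cconj_one hn1,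
    cconj_mul hnd hm hn1, add_mul, mul_add, smul_mul_assoc, mul_smul_comm, one_mul, mul_one,
    hassoc, mul_cconj_self hnd hm hn1, cconj_mul_self hnd hm hn1]
  constructor
  · linear_combination (norm := module) -μ • cconj_mul_add_mul (n := n) a (d * cconj n b)
  · linear_combination (norm := module) -cconj_mul_add_mul (n := n) a (c * b)

theorem cdMul_right_alternative (hnd : ∀ a : A, (∀ b : A, polar n a b = 0) → a = 0)
    (hm : ∀ a b : A, n (a * b) = n a * n b) (hn1 : n 1 = 1)
    (hassoc : ∀ a b c : A, a * b * c = a * (b * c)) (μ : k) (x y : A × A) :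
    cdMul n μ (cdMul n μ y x) x = cdMul n μ y (cdMul n μ x x) := by
  obtain ⟨a, b⟩ := x
  obtain ⟨c, d⟩ := y
  rw [cdMul_self hnd hm hn1]
  simp only [cdMul, Prod.mk.injEq, cconj_add, cconj_smul, cconj_cconj hn1,
    cconj_mul hnd hm hn1, add_mul, mul_add, smul_mul_assoc, mul_smul_comm, one_mul, mul_one,
    hassoc, cconj_mul_self hnd hm hn1]
  have hb : b * (cconj n b * c) = n b • c := by
    rw [← hassoc, mul_cconj_self hnd hm hn1, smul_mul_assoc, one_mul]
  have ha :
      b * (cconj n d * a) + b * (cconj n d * cconj n a) = polar n a 1 • (b * cconj n d) := by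
    rw [← hassoc, ← hassoc, mul_add_mul_cconj]
  constructor
  · linear_combination (norm := module) μ • hb + μ • ha
  · linear_combination (norm := module) cconj_mul_add_mul (n := n) a (cconj n c * b)

theorem mul_assoc_of_cdMul_left_alternative (hn1 : n 1 = 1) {μ : k} (hμ : μ ≠ 0)
    (h : ∀ x y : A × A, cdMul n μ (cdMul n μ x x) y = cdMul n μ x (cdMul n μ x y))
    (a b c : A) : a * b * c = a * (b * c) := by
  have h1 := congrArg Prod.fst (h (cconj n a, cconj n c) (0, b))
  simp only [cdMul, mul_zero, zero_mul, add_zero, zero_add] at h1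
  rw [cconj_mul_add_mul, cconj_smul, cconj_cconj hn1, polar_cconj_one hn1, cconj_cconj hn1,
    mul_smul_comm, mul_smul_comm] at h1
  apply smul_right_injective A hμ
  linear_combination (norm := module) -h1 - μ • cconj_mul_add_mul (n := n) a (b * c)

end Conj

/-- The Cayley–Dickson double `A(μ) = A ⊕ vA` of a composition algebra `A`
is alternative if and only if `A` is associative. -/
theorem stmt_12 {k A : Type*} [Field k] [NonAssocRing A] [Module k A]
    [SMulCommClass k A A] [IsScalarTower k A A]
    (n : QuadraticForm k A)
    (hnd : ∀ a : A, (∀ b : A, polar (⇑n) a b = 0) → a = 0)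
    (hm : ∀ a b : A, n (a * b) = n a * n b)
    (μ : k) (hμ : μ ≠ 0) :
    (∀ x y : A × A,
        cdMul n μ (cdMul n μ x x) y = cdMul n μ x (cdMul n μ x y) ∧
        cdMul n μ (cdMul n μ y x) x = cdMul n μ y (cdMul n μ x x)) ↔
    (∀ a b c : A, a * b * c = a * (b * c)) := by
  rcases subsingleton_or_nontrivial A with hA | hA
  · exact ⟨fun _ _ _ _ => Subsingleton.elim _ _,
      fun _ _ _ => ⟨Subsingleton.elim _ _, Subsingleton.elim _ _⟩⟩
  have hn1 : n 1 = 1 := map_one_of_map_mul hnd hm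
  exact ⟨fun h => mul_assoc_of_cdMul_left_alternative hn1 hμ fun x y => (h x y).1,
    fun hassoc x y => ⟨cdMul_left_alternative hnd hm hn1 hassoc μ x y,
      cdMul_right_alternative hnd hm hn1 hassoc μ x y⟩⟩
end
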